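/- Let A : H_n → ℝ^m satisfy the S_2-robust rank null space property of order r_* with constants 0 < ρ < 1 and τ > 0 relative to a norm ‖·‖ on ℝ^m, and the S_1-quotient property with constant d and rank r_* relative to the same norm. Then for every v ∈ ℝ^m there exists U ∈ H_n with A U = v and, for every 1 ≤ p ≤ 2, ‖U‖_{S_p} ≤ ((1+ρ) d + τ) r_*^{1/p − 1/2} ‖v‖. -/

import Mathlib

open scoped BigOperators
open Matrix

noncomputable def singVal {n : ℕ} (M : Matrix (Fin n) (Fin n) ℂ) (i : Fin n) : ℝ :=
  Real.sqrt ((Matrix.isHermitian_conjTranspose_mul_self M).eigenvalues i)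

noncomputable def sNorm {n : ℕ} (p : ℝ) (M : Matrix (Fin n) (Fin n) ℂ) : ℝ :=
  (∑ i, singVal M i ^ p) ^ (1 / p)

noncomputable def sNormInf {n : ℕ} (M : Matrix (Fin n) (Fin n) ℂ) : ℝ :=
  ⨆ i, singVal M i

def outer {n : ℕ} (a : Fin n → ℂ) : Matrix (Fin n) (Fin n) ℂ :=
  Matrix.of fun i j => a i * star (a j)

noncomputable def measOp {n m : ℕ} (a : Fin m → Fin n → ℂ)
    (X : Matrix (Fin n) (Fin n) ℂ) : Fin m → ℝ :=
  fun j => ((X * outer (a j)).trace).re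

noncomputable def herTrunc {n : ℕ} (r : ℕ) {X : Matrix (Fin n) (Fin n) ℂ}
    (hX : X.IsHermitian) : Matrix (Fin n) (Fin n) ℂ :=
  (hX.eigenvectorUnitary : Matrix (Fin n) (Fin n) ℂ) *
    (Matrix.diagonal fun i =>
      if (((Tuple.sort fun j => -|hX.eigenvalues j|).symm i : Fin n) : ℕ) < r
        then (hX.eigenvalues i : ℂ) else 0) *
    star (hX.eigenvectorUnitary : Matrix (Fin n) (Fin n) ℂ)

/-!
Take the preimage `U` of `v` given by the quotient property and diagonalize it. All Schatten
norms of `U`, of its rank-`r` truncation `U_r` and of `U - U_r` are then `ℓ_p` norms of the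
eigenvalue moduli `|λ|`, split along the index set `S` of the `r` largest ones. By the
triangle inequality `‖U‖_p ≤ ‖U_r‖_p + ‖U - U_r‖_p`. Hölder on the at most `r` entries of `S`
gives `‖U_r‖_p ≤ r^(1/p-1/2) ‖U_r‖_2`, which the null space property bounds by
`r^(1/p-1/2) (ρ ‖U‖_1 / √r + τ ‖v‖)`. Every entry off `S` is at most `‖U‖_1 / r`, whence
`‖U - U_r‖_p ≤ r^(1/p-1) ‖U‖_1`. Finally `‖U‖_1 ≤ d √r ‖v‖`.
-/

open Finset

section LpEstimates

variable {ι : Type*} {a : ι → ℝ} {p : ℝ}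

theorem sum_abs_indicator_rpow [Fintype ι] (s : Finset ι) (x : ι → ℝ) (hp : p ≠ 0) :
    ∑ i, |(s : Set ι).indicator x i| ^ p = ∑ i ∈ s, |x i| ^ p := by
  rw [← sum_indicator_subset (fun i => |x i| ^ p) (subset_univ s)]
  congr 1 with i
  by_cases hi : i ∈ s <;> simp [hi, Real.zero_rpow hp]

theorem rpow_sum_rpow_le_add_compl [Fintype ι] [DecidableEq ι] (ha : ∀ i, 0 ≤ a i) (hp : 1 ≤ p)
    (s : Finset ι) :
    (∑ i, a i ^ p) ^ (1 / p) ≤ (∑ i ∈ s, a i ^ p) ^ (1 / p) + (∑ i ∈ sᶜ, a i ^ p) ^ (1 / p) := by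
  rw [← sum_add_sum_compl s]
  exact Real.rpow_add_le_add_rpow (sum_nonneg fun i _ => Real.rpow_nonneg (ha i) p)
    (sum_nonneg fun i _ => Real.rpow_nonneg (ha i) p) (by positivity)
    (div_le_one_of_le₀ hp (by linarith))

theorem rpow_sum_rpow_le_card_rpow_mul (ha : ∀ i, 0 ≤ a i) (hp0 : 0 < p) (hp2 : p ≤ 2)
    (s : Finset ι) :
    (∑ i ∈ s, a i ^ p) ^ (1 / p) ≤
      (#s : ℝ) ^ (1 / p - 1 / 2) * (∑ i ∈ s, a i ^ (2 : ℝ)) ^ (1 / 2 : ℝ) := by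
  have hq : 1 ≤ 2 / p := by rw [le_div_iff₀ hp0]; linarith
  have hpow : ∀ i, (a i ^ p) ^ (2 / p) = a i ^ (2 : ℝ) := fun i => by
    rw [← Real.rpow_mul (ha i), mul_div_cancel₀ _ hp0.ne']
  have hholder := Real.rpow_sum_le_const_mul_sum_rpow_of_nonneg (s := s) hq
    (fun i _ => Real.rpow_nonneg (ha i) p)
  simp only [hpow] at hholder
  have hsum_nonneg : 0 ≤ ∑ i ∈ s, a i ^ p := sum_nonneg fun i _ => Real.rpow_nonneg (ha i) p
  calc (∑ i ∈ s, a i ^ p) ^ (1 / p) = ((∑ i ∈ s, a i ^ p) ^ (2 / p)) ^ (1 / 2 : ℝ) := by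
        rw [← Real.rpow_mul hsum_nonneg]; congr 1; field_simp
    _ ≤ ((#s : ℝ) ^ (2 / p - 1) * ∑ i ∈ s, a i ^ (2 : ℝ)) ^ (1 / 2 : ℝ) := by gcongr
    _ = (#s : ℝ) ^ (1 / p - 1 / 2) * (∑ i ∈ s, a i ^ (2 : ℝ)) ^ (1 / 2 : ℝ) := by
        rw [Real.mul_rpow (by positivity) (sum_nonneg fun i _ => Real.rpow_nonneg (ha i) 2),
          ← Real.rpow_mul (by positivity)]
        congr 2
        ring

theorem rpow_sum_compl_rpow_le_of_mul_le_sum [Fintype ι] [DecidableEq ι] (ha : ∀ i, 0 ≤ a i)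
    (hp : 1 ≤ p) {r : ℝ} (hr : 0 < r) {s : Finset ι} (hdom : ∀ j ∉ s, r * a j ≤ ∑ i ∈ s, a i) :
    (∑ i ∈ sᶜ, a i ^ p) ^ (1 / p) ≤ r ^ (1 / p - 1) * ∑ i, a i := by
  set t := ∑ i, a i
  have ht : 0 ≤ t := sum_nonneg fun i _ => ha i
  have hle : ∀ j ∈ sᶜ, a j ≤ t / r := fun j hj => by
    rw [le_div_iff₀ hr, mul_comm]
    exact (hdom j (mem_compl.mp hj)).trans
      (sum_le_sum_of_subset_of_nonneg (subset_univ s) fun i _ _ => ha i)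
  have hpow_split : ∀ x : ℝ, 0 ≤ x → x ^ p = x ^ (p - 1) * x := fun x hx => by
    rw [← Real.rpow_add_one' hx (by linarith), sub_add_cancel]
  have hsum : ∑ i ∈ sᶜ, a i ^ p ≤ (t / r) ^ p * r :=
    calc ∑ i ∈ sᶜ, a i ^ p ≤ ∑ i ∈ sᶜ, (t / r) ^ (p - 1) * a i := sum_le_sum fun j hj => by
          rw [hpow_split _ (ha j)]
          have := ha j
          gcongr
          exact hle j hj
      _ ≤ (t / r) ^ (p - 1) * t := by
          rw [← mul_sum]
          gcongr
          exact sum_le_sum_of_subset_of_nonneg (subset_univ _) fun i _ _ => ha i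
      _ = (t / r) ^ p * r := by
          rw [hpow_split _ (by positivity)]
          field_simp
  calc (∑ i ∈ sᶜ, a i ^ p) ^ (1 / p) ≤ ((t / r) ^ p * r) ^ (1 / p) :=
        Real.rpow_le_rpow (sum_nonneg fun i _ => Real.rpow_nonneg (ha i) p) hsum (by positivity)
    _ = r ^ (1 / p - 1) * t := by
        rw [Real.mul_rpow (by positivity) hr.le, one_div, Real.rpow_rpow_inv (by positivity)
          (by linarith), Real.rpow_sub_one hr.ne']
        field_simp

theorem rpow_sum_rpow_le_of_nullSpace_bound [Fintype ι] [DecidableEq ι] (ha : ∀ i, 0 ≤ a i)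
    (hp1 : 1 ≤ p) (hp2 : p ≤ 2) {r : ℝ} (hr : 0 < r) {s : Finset ι} (hcard : (#s : ℝ) ≤ r)
    (hdom : ∀ j ∉ s, r * a j ≤ ∑ i ∈ s, a i) {ρ B C : ℝ} (hρ : 0 ≤ ρ)
    (hsum : ∑ i, a i ≤ B * √r)
    (hhead : (∑ i ∈ s, a i ^ (2 : ℝ)) ^ (1 / 2 : ℝ) ≤ ρ / √r * ∑ i ∈ sᶜ, a i + C) :
    (∑ i, a i ^ p) ^ (1 / p) ≤ r ^ (1 / p - 1 / 2) * ((1 + ρ) * B + C) := by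
  have htail : ∑ i ∈ sᶜ, a i ≤ B * √r :=
    (sum_le_sum_of_subset_of_nonneg (subset_univ _) fun i _ _ => ha i).trans hsum
  have hhead_le : (∑ i ∈ s, a i ^ (2 : ℝ)) ^ (1 / 2 : ℝ) ≤ ρ * B + C :=
    calc _ ≤ ρ / √r * ∑ i ∈ sᶜ, a i + C := hhead
      _ ≤ ρ / √r * (B * √r) + C := by gcongr
      _ = ρ * B + C := by field_simp
  have hexp : r ^ (1 / p - 1) * √r = r ^ (1 / p - 1 / 2) := by
    rw [Real.sqrt_eq_rpow, ← Real.rpow_add hr]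
    ring_nf
  have h12 : (1 : ℝ) / 2 ≤ 1 / p := one_div_le_one_div_of_le (by linarith) hp2
  have hhead_nonneg : 0 ≤ (∑ i ∈ s, a i ^ (2 : ℝ)) ^ (1 / 2 : ℝ) :=
    Real.rpow_nonneg (sum_nonneg fun i _ => Real.rpow_nonneg (ha i) 2) _
  calc (∑ i, a i ^ p) ^ (1 / p)
      ≤ (∑ i ∈ s, a i ^ p) ^ (1 / p) + (∑ i ∈ sᶜ, a i ^ p) ^ (1 / p) :=
        rpow_sum_rpow_le_add_compl ha hp1 s
    _ ≤ r ^ (1 / p - 1 / 2) * (∑ i ∈ s, a i ^ (2 : ℝ)) ^ (1 / 2 : ℝ) +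
          r ^ (1 / p - 1) * ∑ i, a i := by
        gcongr ?_ + ?_
        · refine (rpow_sum_rpow_le_card_rpow_mul ha (by linarith) hp2 s).trans ?_
          gcongr
        · exact rpow_sum_compl_rpow_le_of_mul_le_sum ha hp1 hr hdom
    _ ≤ r ^ (1 / p - 1 / 2) * (ρ * B + C) + r ^ (1 / p - 1) * (B * √r) := by gcongr
    _ = r ^ (1 / p - 1 / 2) * ((1 + ρ) * B + C) := by linear_combination B * hexp

end LpEstimates

open Polynomial in
theorem Matrix.IsHermitian.map_eigenvalues_eq_of_eq_conj_diagonal {𝕜 ι : Type*} [RCLike 𝕜]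
    [Fintype ι] [DecidableEq ι] {B V : Matrix ι ι 𝕜} (hB : B.IsHermitian)
    (hV : V ∈ unitaryGroup ι 𝕜) (w : ι → ℝ)
    (h : B = V * diagonal (fun i => (w i : 𝕜)) * star V) :
    univ.val.map hB.eigenvalues = univ.val.map w := by
  have hchar : B.charpoly = ∏ i, (X - C (w i : 𝕜)) := by
    rw [h, charpoly_mul_comm, ← mul_assoc, Unitary.star_mul_self_of_mem hV, one_mul,
      charpoly_diagonal]
  have hroots := hB.roots_charpoly_eq_eigenvalues
  rw [hchar, roots_prod _ _ (prod_ne_zero_iff.mpr fun i _ => X_sub_C_ne_zero _)] at hroots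
  apply Multiset.map_injective (RCLike.ofReal_injective (K := 𝕜))
  simpa [Multiset.map_map] using hroots.symm

theorem conjTranspose_mul_self_unitary_conj_diagonal {𝕜 ι : Type*} [RCLike 𝕜] [Fintype ι]
    [DecidableEq ι] {V : Matrix ι ι 𝕜} (hV : V ∈ unitaryGroup ι 𝕜) (d : ι → ℝ) :
    (V * diagonal (fun i => (d i : 𝕜)) * star V)ᴴ *
        (V * diagonal (fun i => (d i : 𝕜)) * star V) =
      V * diagonal (fun i => ((d i * d i : ℝ) : 𝕜)) * star V := by
  have hD : (diagonal fun i => (d i : 𝕜)).IsHermitian := by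
    simp [IsHermitian, diagonal_conjTranspose, Pi.star_def]
  rw [star_eq_conjTranspose, (isHermitian_mul_mul_conjTranspose V hD).eq,
    ← star_eq_conjTranspose]
  calc _ = V * diagonal (fun i => (d i : 𝕜)) * (star V * V) * diagonal (fun i => (d i : 𝕜)) *
        star V := by simp only [mul_assoc]
    _ = _ := by
      rw [Unitary.star_mul_self_of_mem hV, mul_one, mul_assoc V, diagonal_mul_diagonal]
      push_cast
      rfl

theorem map_singVal_unitary_conj_diagonal {n : ℕ} {V : Matrix (Fin n) (Fin n) ℂ}
    (hV : V ∈ unitaryGroup (Fin n) ℂ) (d : Fin n → ℝ) :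
    univ.val.map (singVal (V * diagonal (fun i => (d i : ℂ)) * star V)) =
      univ.val.map fun i => |d i| := by
  have h := congrArg (Multiset.map Real.sqrt)
    ((isHermitian_conjTranspose_mul_self _).map_eigenvalues_eq_of_eq_conj_diagonal hV _
      (conjTranspose_mul_self_unitary_conj_diagonal hV d))
  simp only [Multiset.map_map, Function.comp_def, Real.sqrt_mul_self_eq_abs] at h
  exact h

theorem sNorm_unitary_conj_diagonal {n : ℕ} {V : Matrix (Fin n) (Fin n) ℂ}
    (hV : V ∈ unitaryGroup (Fin n) ℂ) (d : Fin n → ℝ) (p : ℝ) :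
    sNorm p (V * diagonal (fun i => (d i : ℂ)) * star V) = (∑ i, |d i| ^ p) ^ (1 / p) := by
  have h := congrArg (fun s => (s.map (· ^ p)).sum) (map_singVal_unitary_conj_diagonal hV d)
  simp only [Multiset.map_map, Function.comp_def] at h
  rw [sNorm, sum_eq_multiset_sum, sum_eq_multiset_sum, h]

theorem sNorm_eq_of_isHermitian {n : ℕ} {X : Matrix (Fin n) (Fin n) ℂ} (hX : X.IsHermitian)
    (p : ℝ) : sNorm p X = (∑ i, |hX.eigenvalues i| ^ p) ^ (1 / p) := by
  conv_lhs => rw [hX.spectral_theorem, Unitary.conjStarAlgAut_apply]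
  exact sNorm_unitary_conj_diagonal hX.eigenvectorUnitary.2 _ p

-- The index set kept by `herTrunc`, ties among equal moduli broken the same way.
noncomputable def topIndices {n : ℕ} (x : Fin n → ℝ) (r : ℕ) : Finset (Fin n) :=
  {i | ((Tuple.sort fun j => -|x j|).symm i : ℕ) < r}

section topIndices

variable {n : ℕ} (x : Fin n → ℝ) (r : ℕ)

theorem card_topIndices : #(topIndices x r) = min n r := by
  rw [← Fin.card_filter_val_lt]
  exact card_equiv (Tuple.sort fun j => -|x j|).symm (by simp [topIndices])

theorem abs_le_of_mem_topIndices {i j : Fin n} (hi : i ∈ topIndices x r)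
    (hj : j ∉ topIndices x r) : |x j| ≤ |x i| := by
  simp only [topIndices, mem_filter, mem_univ, true_and, not_lt] at hi hj
  have := Tuple.monotone_sort (fun j => -|x j|) (show _ ≤ _ from (hi.trans_le hj).le)
  simpa using this

theorem mul_abs_le_sum_topIndices {j : Fin n} (hj : j ∉ topIndices x r) :
    r * |x j| ≤ ∑ i ∈ topIndices x r, |x i| := by
  have hcard : #(topIndices x r) = r := by
    simp only [topIndices, mem_filter, mem_univ, true_and, not_lt] at hj
    rw [card_topIndices, min_eq_right (hj.trans (Fin.is_lt _).le)]
  simpa [hcard] using card_nsmul_le_sum _ _ _ fun i hi => abs_le_of_mem_topIndices x r hi hj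

end topIndices

theorem herTrunc_eq {n : ℕ} (r : ℕ) {X : Matrix (Fin n) (Fin n) ℂ} (hX : X.IsHermitian) :
    herTrunc r hX = hX.eigenvectorUnitary.1 *
      diagonal (fun i =>
        (((topIndices hX.eigenvalues r : Set (Fin n)).indicator hX.eigenvalues i : ℝ) : ℂ)) *
      star hX.eigenvectorUnitary.1 := by
  simp [herTrunc, topIndices, Set.indicator_apply, apply_ite]

theorem sub_herTrunc_eq {n : ℕ} (r : ℕ) {X : Matrix (Fin n) (Fin n) ℂ} (hX : X.IsHermitian) :
    X - herTrunc r hX = hX.eigenvectorUnitary.1 *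
      diagonal (fun i =>
        ((((topIndices hX.eigenvalues r)ᶜ : Set (Fin n)).indicator hX.eigenvalues i : ℝ) : ℂ)) *
      star hX.eigenvectorUnitary.1 := by
  rw [herTrunc_eq]
  conv_lhs => arg 1; rw [hX.spectral_theorem, Unitary.conjStarAlgAut_apply]
  rw [← sub_mul, ← mul_sub, diagonal_sub]
  simp [Set.indicator_apply, apply_ite]

theorem sNorm_herTrunc {n : ℕ} (r : ℕ) {X : Matrix (Fin n) (Fin n) ℂ} (hX : X.IsHermitian)
    {p : ℝ} (hp : p ≠ 0) :
    sNorm p (herTrunc r hX) =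
      (∑ i ∈ topIndices hX.eigenvalues r, |hX.eigenvalues i| ^ p) ^ (1 / p) := by
  rw [herTrunc_eq, sNorm_unitary_conj_diagonal hX.eigenvectorUnitary.2,
    sum_abs_indicator_rpow _ _ hp]

theorem sNorm_sub_herTrunc {n : ℕ} (r : ℕ) {X : Matrix (Fin n) (Fin n) ℂ} (hX : X.IsHermitian)
    {p : ℝ} (hp : p ≠ 0) :
    sNorm p (X - herTrunc r hX) =
      (∑ i ∈ (topIndices hX.eigenvalues r)ᶜ, |hX.eigenvalues i| ^ p) ^ (1 / p) := by
  rw [sub_herTrunc_eq, sNorm_unitary_conj_diagonal hX.eigenvectorUnitary.2, ← coe_compl,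
    sum_abs_indicator_rpow _ _ hp]

theorem nsp_and_qp_give_preimage_bound_general {n m : ℕ} (rstar : ℕ) (hrstar : 1 ≤ rstar)
    (ρ τ d : ℝ) (hρ0 : 0 < ρ)
    (A : Matrix (Fin n) (Fin n) ℂ → (Fin m → ℝ))
    (Nrm : (Fin m → ℝ) → ℝ)
    (hNSP : ∀ (X : Matrix (Fin n) (Fin n) ℂ) (hX : X.IsHermitian),
      sNorm 2 (herTrunc rstar hX) ≤
        ρ / Real.sqrt rstar * sNorm 1 (X - herTrunc rstar hX) + τ * Nrm (A X))
    (hQP : ∀ v : Fin m → ℝ, ∃ U : Matrix (Fin n) (Fin n) ℂ, U.IsHermitian ∧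
      A U = v ∧ sNorm 1 U ≤ d * Real.sqrt rstar * Nrm v) :
    ∀ v : Fin m → ℝ, ∃ U : Matrix (Fin n) (Fin n) ℂ, U.IsHermitian ∧ A U = v ∧
      ∀ p : ℝ, 1 ≤ p → p ≤ 2 →
        sNorm p U ≤ ((1 + ρ) * d + τ) * (rstar : ℝ) ^ (1 / p - 1 / 2 : ℝ) * Nrm v := by
  intro v
  obtain ⟨U, hU, hAU, hU1⟩ := hQP v
  refine ⟨U, hU, hAU, fun p hp1 hp2 => ?_⟩
  have hr : (0 : ℝ) < rstar := by exact_mod_cast hrstar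
  have hsum : ∑ i, |hU.eigenvalues i| ≤ d * Nrm v * √rstar := by
    rw [mul_right_comm]
    simpa only [sNorm_eq_of_isHermitian hU, Real.rpow_one, div_one] using hU1
  have hnsp := hNSP U hU
  rw [sNorm_herTrunc _ hU two_ne_zero, sNorm_sub_herTrunc _ hU one_ne_zero, hAU] at hnsp
  simp only [Real.rpow_one, div_one] at hnsp
  rw [sNorm_eq_of_isHermitian hU]
  refine (rpow_sum_rpow_le_of_nullSpace_bound (fun i => abs_nonneg _) hp1 hp2 hr
    (mod_cast (card_topIndices _ rstar).trans_le (min_le_right _ _))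
    (fun j hj => mul_abs_le_sum_topIndices _ rstar hj) hρ0.le hsum hnsp).trans_eq ?_
  ring

/-- If A satisfies the S_2-robust rank null space property of order
r_* with constants 0 < ρ < 1, τ > 0 relative to a norm ‖·‖ on ℝ^m, and the
S_1-quotient property with constant d and rank r_* relative to the same norm,
then for every v ∈ ℝ^m there is a Hermitian U with A U = v and, for every
1 ≤ p ≤ 2, ‖U‖_{S_p} ≤ ((1+ρ)d + τ) r_*^{1/p − 1/2} ‖v‖. -/
theorem nsp_and_qp_give_preimage_bound {n m : ℕ} (rstar : ℕ) (hrstar : 1 ≤ rstar)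
    (ρ τ d : ℝ) (hρ0 : 0 < ρ) (hρ1 : ρ < 1) (hτ : 0 < τ) (hd : 0 < d)
    (A : Matrix (Fin n) (Fin n) ℂ → (Fin m → ℝ))
    (Nrm : (Fin m → ℝ) → ℝ) (hN0 : ∀ v, 0 ≤ Nrm v)
    (hNSP : ∀ (X : Matrix (Fin n) (Fin n) ℂ) (hX : X.IsHermitian),
      sNorm 2 (herTrunc rstar hX) ≤
        ρ / Real.sqrt rstar * sNorm 1 (X - herTrunc rstar hX) + τ * Nrm (A X))
    (hQP : ∀ v : Fin m → ℝ, ∃ U : Matrix (Fin n) (Fin n) ℂ, U.IsHermitian ∧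
      A U = v ∧ sNorm 1 U ≤ d * Real.sqrt rstar * Nrm v) :
    ∀ v : Fin m → ℝ, ∃ U : Matrix (Fin n) (Fin n) ℂ, U.IsHermitian ∧ A U = v ∧
      ∀ p : ℝ, 1 ≤ p → p ≤ 2 →
        sNorm p U ≤ ((1 + ρ) * d + τ) * (rstar : ℝ) ^ (1 / p - 1 / 2 : ℝ) * Nrm v :=
  nsp_and_qp_give_preimage_bound_general rstar hrstar ρ τ d hρ0 A Nrm hNSP hQP
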